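/- arXiv:1901.10432 — 2 statements merged into one kernel-verified Lean document; each statement's English description precedes it below -/
import Mathlib

section
/- Suppose the ℤ²-subshift Y is a recoding of the ℤ²-subshift X via a finite set F ⊆ ℤ², and let ℓ be a rational ray that is nonexpansive (for X, equivalently for Y). Then ℓ is closing for X if and only if ℓ is closing for Y. -/
namespace PolygonalShifts

abbrev Z2 : Type := ℤ × ℤ

abbrev Config (A : Type*) : Type _ := Z2 → A

/-- The translation action of `ℤ²` on configurations. -/
def shiftAct {A : Type*} (u : Z2) (x : Config A) : Config A := fun w => x (u + w)

/-- A `ℤ²`-subshift: a closed (for the product topology, with the alphabet discrete)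
and translation-invariant set of configurations. -/
def IsSubshift {A : Type*} (X : Set (Config A)) : Prop :=
  (letI : TopologicalSpace A := ⊥
   IsClosed X) ∧
  ∀ u : Z2, ∀ x ∈ X, shiftAct u x ∈ X

/-- The canonical embedding `ℤ² → ℝ²`. -/
def toR2 (p : Z2) : ℝ × ℝ := ((p.1 : ℝ), (p.2 : ℝ))

/-- `S` X-codes `S'`, for subsets `S, S'` of `ℝ²`. -/
def Codes {A : Type*} (X : Set (Config A)) (S S' : Set (ℝ × ℝ)) : Prop :=
  ∀ x ∈ X, ∀ x' ∈ X,
    (∀ p : Z2, toR2 p ∈ S → x p = x' p) →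
    ∀ p : Z2, toR2 p ∈ S' → x p = x' p

/-- `S` X-codes `S'`, for subsets `S, S'` of `ℤ²`. -/
def CodesZ {A : Type*} (X : Set (Config A)) (S S' : Set Z2) : Prop :=
  ∀ x ∈ X, ∀ x' ∈ X, (∀ p ∈ S, x p = x' p) → ∀ p ∈ S', x p = x' p

/-- `Y` is a recoding of `X` via the finite set `F ⊆ ℤ²`. -/
def IsRecodingVia {A A' : Type*} (X : Set (Config A)) (Y : Set (Config A'))
    (F : Set Z2) : Prop :=
  letI : TopologicalSpace A := ⊥
  letI : TopologicalSpace A' := ⊥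
  ∃ Ψ : X ≃ₜ Y,
    (∀ (u : Z2) (x x' : X), (x' : Config A) = shiftAct u (x : Config A) →
      (↑(Ψ x') : Config A') = shiftAct u (↑(Ψ x) : Config A')) ∧
    (∀ (u : Z2) (x x' : X),
      (↑(Ψ x) : Config A') u = (↑(Ψ x') : Config A') u ↔
        ∀ f ∈ F, (x : Config A) (f + u) = (x' : Config A) (f + u))

/-- `Y` is a recoding of `X`. -/
def IsRecoding {A A' : Type*} (X : Set (Config A)) (Y : Set (Config A')) : Prop :=
  ∃ F : Set Z2, F.Finite ∧ IsRecodingVia X Y F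

/-- Integer cross product. -/
def crossZ (u v : Z2) : ℤ := u.1 * v.2 - u.2 * v.1

/-- Real cross product. -/
def crossR (u v : ℝ × ℝ) : ℝ := u.1 * v.2 - u.2 * v.1

/-- A convex integer polygon, given by its (at least three) vertices listed in
counterclockwise order: every vertex lies strictly to the left of every directed edge. -/
structure IntPolygon where
  n : ℕ
  vert : Fin (n + 3) → Z2
  convex : ∀ i j : Fin (n + 3), j ≠ i → j ≠ i + 1 →
    0 < crossZ (vert (i + 1) - vert i) (vert j - vert i)

namespace IntPolygon

/-- The oriented edge vector from vertex `i` to vertex `i+1`. -/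
def edgeVec (P : IntPolygon) (i : Fin (P.n + 3)) : Z2 := P.vert (i + 1) - P.vert i

/-- The polygon as a subset of `ℝ²` (the convex hull of its vertices). -/
def carrier (P : IntPolygon) : Set (ℝ × ℝ) :=
  convexHull ℝ (Set.range fun i => toR2 (P.vert i))

lemma crossZ_smul (m : ℤ) (u v : Z2) : crossZ (m • u) (m • v) = m ^ 2 * crossZ u v := by
  simp only [crossZ, Prod.smul_fst, Prod.smul_snd, smul_eq_mul]
  ring

/-- The dilation of a polygon by a positive integer factor about the origin. -/
def dilate (P : IntPolygon) (m : ℤ) (hm : 0 < m) : IntPolygon where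
  n := P.n
  vert := fun i => m • P.vert i
  convex := by
    intro i j hj hj1
    have h := P.convex i j hj hj1
    have e1 : m • P.vert (i + 1) - m • P.vert i = m • (P.vert (i + 1) - P.vert i) :=
      (smul_sub m _ _).symm
    have e2 : m • P.vert j - m • P.vert i = m • (P.vert j - P.vert i) :=
      (smul_sub m _ _).symm
    rw [e1, e2, crossZ_smul]
    exact mul_pos (pow_pos hm 2) h

end IntPolygon

/-- `P` is a coding polygon for `X`: for each vertex `w`, the polygon with `w`
removed X-codes `w`. -/
def IsCodingPolygon {A : Type*} (X : Set (Config A)) (P : IntPolygon) : Prop :=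
  ∀ i : Fin (P.n + 3),
    Codes X (P.carrier \ {toR2 (P.vert i)}) {toR2 (P.vert i)}

/-- `X` is polygonal with respect to `P`. -/
def Polygonal {A : Type*} (X : Set (Config A)) (P : IntPolygon) : Prop :=
  X.Infinite ∧ IsCodingPolygon X P

/-- The closed half plane `H_v = {w : v₁ w₂ − v₂ w₁ ≥ 0}` to the left of the direction `v`. -/
def leftHalfPlane (v : ℝ × ℝ) : Set (ℝ × ℝ) := {w | 0 ≤ v.1 * w.2 - v.2 * w.1}

/-- The ray directed by `v` is expansive for `X`: `H_v` X-codes all of `ℝ²`. -/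
def ExpansiveRay {A : Type*} (X : Set (Config A)) (v : ℝ × ℝ) : Prop :=
  Codes X (leftHalfPlane v) Set.univ

/-- For a primitive integer direction `v`, the line `L₀`: the translate of `L = ℝ·v`
by an integer vector, lying outside `H_v` and closest to `L`. -/
def lineL0 (v : Z2) : Set (ℝ × ℝ) := {w | (v.1 : ℝ) * w.2 - (v.2 : ℝ) * w.1 = -1}

/-- A block of `m` consecutive lattice points on `L₀`, starting at `z`. -/
def blockOn (v z : Z2) (m : ℕ) : Set (ℝ × ℝ) :=
  (fun k : ℕ => toR2 (z + (k : ℤ) • v)) '' {k | k < m}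

/-- The (nonexpansive) rational ray directed by the primitive vector `v` is closing for `X`. -/
def ClosingRay {A : Type*} (X : Set (Config A)) (v : Z2) : Prop :=
  ∃ N : ℕ, ∀ z : Z2, v.1 * z.2 - v.2 * z.1 = -1 →
    ∀ m : ℕ, N ≤ m →
      Codes X (leftHalfPlane (toR2 v) ∪ blockOn v z m) (lineL0 v)

/-- The sector (with vertex the origin) determined by the rays through `e₁` and `e₂`:
lattice points on either ray or strictly between them. -/
def SectorZ (e₁ e₂ : Z2) : Set Z2 :=
  {p | SameRay ℝ (toR2 e₁) (toR2 p) ∨ SameRay ℝ (toR2 e₂) (toR2 p) ∨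
       (0 < crossZ e₁ p ∧ 0 < crossZ p e₂)}

/-- The rational sector determined by `(e₁, e₂)` is corner coding for `X`. -/
def IsCornerCoding {A : Type*} (X : Set (Config A)) (e₁ e₂ : Z2) : Prop :=
  CodesZ X (SectorZ e₁ e₂ \ {0}) {0}

/-- The rational sector determined by `(e₁, e₂)` is weakly corner coding for `X`. -/
def IsWeaklyCornerCoding {A : Type*} (X : Set (Config A)) (e₁ e₂ : Z2) : Prop :=
  ∃ F₀ : Set Z2, F₀.Finite ∧ F₀ ⊆ SectorZ e₁ e₂ ∧
    ∀ F : Set Z2, F.Finite → F ⊆ SectorZ e₁ e₂ →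
      CodesZ X (SectorZ e₁ e₂ \ F) (SectorZ e₁ e₂ \ F₀)

/-- The sector based at the vertex `i` of the polygon `P`: lattice points in the convex
cone with apex `P.vert i` spanned by the two edges of `P` incident to that vertex. -/
def vertexSector (P : IntPolygon) (i : Fin (P.n + 3)) : Set Z2 :=
  {p | ∃ s t : ℝ, 0 ≤ s ∧ 0 ≤ t ∧
    toR2 p = toR2 (P.vert i) + s • toR2 (P.vert (i - 1) - P.vert i)
      + t • toR2 (P.vert (i + 1) - P.vert i)}

/-- `P` is a coding polygon for some recoding of `X`. -/
def HasRecodingPolygon {A : Type*} (X : Set (Config A)) (P : IntPolygon) : Prop :=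
  ∃ (A' : Type) (_ : Fintype A') (Y : Set (Config A')),
    IsSubshift Y ∧ IsRecoding X Y ∧ IsCodingPolygon Y P

/-- `P` is a minimal recoding polygon for `X`. -/
def IsMinimalRecodingPolygon {A : Type*} (X : Set (Config A)) (P : IntPolygon) : Prop :=
  HasRecodingPolygon X P ∧
  (∀ Q : IntPolygon, HasRecodingPolygon X Q → P.n ≤ Q.n) ∧
  (∀ Q : IntPolygon, HasRecodingPolygon X Q → Q.n = P.n →
    Q.carrier ⊆ P.carrier → Q.carrier = P.carrier)

/-! Write `a` for the least value of `crossZ v` on `F`, attained at `f₀`. Since `Ψ x` at `u` is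
determined by `x` on `F + u`, agreement of two points of `Y` on `H_v` and on a block of `L₀`
means agreement of their preimages on the half plane `a ≤ crossZ v` and on a block of the level
`a - 1`; the closing property of `X`, translated to that level, extends the agreement to
`a - 1 ≤ crossZ v`, which contains `F + L₀`. Conversely, agreement in `X` on `H_v`
and on a block of length `N + 2M` gives agreement of the images on `-a ≤ crossZ v` and on a block
of length `N` of the level `-a - 1`, where `M` bounds the spread along `v` of the points of `F` on
the level `a`; the closing property of `Y` covers `L₀ - f₀`, and `f₀ ∈ F` pulls this back to
`L₀`. -/

open Set

lemma crossZ_add_right (v a b : Z2) : crossZ v (a + b) = crossZ v a + crossZ v b := by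
  simp only [crossZ, Prod.fst_add, Prod.snd_add]; ring

lemma crossZ_sub_right (v a b : Z2) : crossZ v (a - b) = crossZ v a - crossZ v b := by
  simp only [crossZ, Prod.fst_sub, Prod.snd_sub]; ring

lemma crossZ_smul_right (v : Z2) (k : ℤ) (b : Z2) : crossZ v (k • b) = k * crossZ v b := by
  simp only [crossZ, Prod.smul_fst, Prod.smul_snd, smul_eq_mul]; ring

lemma crossZ_self (v : Z2) : crossZ v v = 0 := by
  simp only [crossZ]; ring

lemma eq_smul_of_crossZ_eq_zero {v z d : Z2} (hz : crossZ v z = -1) (hd : crossZ v d = 0) :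
    d = crossZ z d • v := by
  simp only [crossZ] at hz hd ⊢
  ext
  · simp only [Prod.smul_fst, smul_eq_mul]; linear_combination d.1 * hz - z.1 * hd
  · simp only [Prod.smul_snd, smul_eq_mul]; linear_combination d.2 * hz - z.2 * hd

lemma natAbs_le_of_eq_smul {v d : Z2} {j : ℤ} (hv : v ≠ 0) (hd : d = j • v) :
    j.natAbs ≤ d.1.natAbs + d.2.natAbs := by
  subst hd
  simp only [Prod.smul_fst, Prod.smul_snd, smul_eq_mul, Int.natAbs_mul]
  have hv1 : 1 ≤ v.1.natAbs + v.2.natAbs := by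
    by_contra! h
    exact hv (Prod.ext (Int.natAbs_eq_zero.mp (by omega)) (Int.natAbs_eq_zero.mp (by omega)))
  rw [← mul_add]
  exact Nat.le_mul_of_pos_right _ hv1

lemma toR2_injective : Function.Injective toR2 := fun p q h =>
  Prod.ext (by simpa [toR2] using congrArg Prod.fst h) (by simpa [toR2] using congrArg Prod.snd h)

lemma cast_crossZ (v p : Z2) :
    ((crossZ v p : ℤ) : ℝ) = (v.1 : ℝ) * (p.2 : ℝ) - (v.2 : ℝ) * (p.1 : ℝ) := by
  simp only [crossZ]; push_cast; ring

lemma toR2_mem_leftHalfPlane {v p : Z2} :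
    toR2 p ∈ leftHalfPlane (toR2 v) ↔ 0 ≤ crossZ v p := by
  simp only [leftHalfPlane, mem_ofPred_eq, toR2, ← cast_crossZ]
  exact Int.cast_nonneg_iff

lemma toR2_mem_lineL0 {v p : Z2} : toR2 p ∈ lineL0 v ↔ crossZ v p = -1 := by
  simp only [lineL0, mem_ofPred_eq, toR2, ← cast_crossZ]
  exact_mod_cast Iff.rfl

lemma toR2_mem_blockOn {v z p : Z2} {m : ℕ} :
    toR2 p ∈ blockOn v z m ↔ ∃ k < m, p = z + (k : ℤ) • v := by
  simp only [blockOn, mem_image, mem_ofPred_eq, toR2_injective.eq_iff, eq_comm (a := p)]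

def ClosingWith {A : Type*} (X : Set (Config A)) (v : Z2) (N : ℕ) : Prop :=
  ∀ z : Z2, v.1 * z.2 - v.2 * z.1 = -1 → ∀ m : ℕ, N ≤ m →
    Codes X (leftHalfPlane (toR2 v) ∪ blockOn v z m) (lineL0 v)

/-- Translating by `z - z₀` carries `H_v` and `L₀` onto `c ≤ crossZ v q` and the level below
it. -/
theorem ClosingWith.eqOn_le_sub_one {A : Type*} {X : Set (Config A)}
    (hX : ∀ u, ∀ x ∈ X, shiftAct u x ∈ X) {v : Z2} {N : ℕ}
    (hN : ClosingWith X v N) {z₀ z : Z2} {c : ℤ} (hz₀ : crossZ v z₀ = -1)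
    (hz : crossZ v z = c - 1) {m : ℕ} (hm : N ≤ m) {x x' : Config A} (hx : x ∈ X)
    (hx' : x' ∈ X) (hH : EqOn x x' {q | c ≤ crossZ v q})
    (hB : ∀ k < m, x (z + (k : ℤ) • v) = x' (z + (k : ℤ) • v)) :
    EqOn x x' {q | c - 1 ≤ crossZ v q} := by
  set t := z - z₀
  have ht : crossZ v t = c := by rw [crossZ_sub_right, hz, hz₀]; ring
  have hline := hN z₀ hz₀ m hm _ (hX t x hx) _ (hX t x' hx') <| by
    rintro p (hp | hp)
    · exact hH (show c ≤ crossZ v (t + p) by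
        rw [crossZ_add_right, ht]; linarith [toR2_mem_leftHalfPlane.mp hp])
    · obtain ⟨k, hk, rfl⟩ := toR2_mem_blockOn.mp hp
      have hshift : t + (z₀ + (k : ℤ) • v) = z + (k : ℤ) • v := by
        simp only [t]; abel
      simpa only [shiftAct, hshift] using hB k hk
  intro q (hq : c - 1 ≤ crossZ v q)
  rcases hq.eq_or_lt with hq | hq
  · have := hline (q - t) <| toR2_mem_lineL0.mpr (by rw [crossZ_sub_right, ← hq, ht]; ring)
    simpa only [shiftAct, add_sub_cancel] using this
  · exact hH (show c ≤ crossZ v q by omega)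

lemma eqOn_of_agree_leftHalfPlane_union_blockOn {A : Type*} {x x' : Config A} {v z : Z2}
    {m : ℕ}
    (h : ∀ p : Z2, toR2 p ∈ leftHalfPlane (toR2 v) ∪ blockOn v z m → x p = x' p) :
    EqOn x x' {q | 0 ≤ crossZ v q} ∧ ∀ k < m, x (z + (k : ℤ) • v) = x' (z + (k : ℤ) • v) :=
  ⟨fun _ hq => h _ (Or.inl (toR2_mem_leftHalfPlane.mpr hq)),
    fun k hk => h _ (Or.inr (toR2_mem_blockOn.mpr ⟨k, hk, rfl⟩))⟩

/-- Shifting the block by `M` steps keeps `f + u` inside it for every `f` on the lowest level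
of `F`, since those `f` differ from `f₀` by at most `M` steps along `v`. -/
lemma apply_add_eq_of_eqOn_of_block {A : Type*} {x x' : Config A} {F : Set Z2} {v z f₀ : Z2}
    {M m k : ℕ} (hz : crossZ v z = -1) (hmin : ∀ f ∈ F, crossZ v f₀ ≤ crossZ v f)
    (hM : ∀ f ∈ F, (f - f₀).1.natAbs + (f - f₀).2.natAbs ≤ M)
    (hH : EqOn x x' {q | 0 ≤ crossZ v q})
    (hB : ∀ k < m, x (z + (k : ℤ) • v) = x' (z + (k : ℤ) • v)) (hk : k + 2 * M < m) :
    ∀ f ∈ F, x (f + (z - f₀ + (M : ℤ) • v + (k : ℤ) • v))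
      = x' (f + (z - f₀ + (M : ℤ) • v + (k : ℤ) • v)) := by
  intro f hf
  rcases (hmin f hf).lt_or_eq with hlt | heq
  · refine hH (show 0 ≤ crossZ v _ from ?_)
    simp only [crossZ_add_right, crossZ_sub_right, crossZ_smul_right, crossZ_self, hz]
    linarith
  have hv : v ≠ 0 := by rintro rfl; simp [crossZ] at hz
  have hd := eq_smul_of_crossZ_eq_zero hz (d := f - f₀) (by rw [crossZ_sub_right]; omega)
  set j := crossZ z (f - f₀)
  have hj : j.natAbs ≤ M := (natAbs_le_of_eq_smul hv hd).trans (hM f hf)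
  obtain ⟨k', hk'⟩ : ∃ k' : ℕ, (k' : ℤ) = j + M + k := ⟨_, Int.toNat_of_nonneg (by omega)⟩
  have hpt : f + (z - f₀ + (M : ℤ) • v + (k : ℤ) • v) = z + (k' : ℤ) • v := by
    rw [hk', add_smul, add_smul, ← hd]; abel
  rw [hpt]
  exact hB k' (by omega)

def HasExactWindow {A A' : Type*} {X : Set (Config A)} {Y : Set (Config A')} (Ψ : X → Y)
    (F : Set Z2) : Prop :=
  ∀ u (x x' : X), (Ψ x : Config A') u = (Ψ x' : Config A') u ↔
    ∀ f ∈ F, (x : Config A) (f + u) = (x' : Config A) (f + u)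

section Recoding
variable {A A' : Type*} {X : Set (Config A)} {Y : Set (Config A')} {F : Set Z2} {Ψ : X → Y}

theorem ClosingRay.of_surjective (hX : ∀ u, ∀ x ∈ X, shiftAct u x ∈ X) (hF : F.Finite)
    (hΨ : Function.Surjective Ψ) (hrule : HasExactWindow Ψ F)
    {v : Z2} (h : ClosingRay X v) : ClosingRay Y v := by
  obtain ⟨N, hN : ClosingWith X v N⟩ := h
  refine ⟨N, fun z hz m hm y hy y' hy' hagree p hp => ?_⟩
  obtain ⟨x, hxy⟩ := hΨ ⟨y, hy⟩
  obtain ⟨x', hxy'⟩ := hΨ ⟨y', hy'⟩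
  have hrule' (u : Z2) :
      y u = y' u ↔ ∀ f ∈ F, (x : Config A) (f + u) = (x' : Config A) (f + u) := by
    rw [← hrule, hxy, hxy']
  obtain ⟨hH, hB⟩ := eqOn_of_agree_leftHalfPlane_union_blockOn hagree
  refine (hrule' p).mpr fun f hf => ?_
  obtain ⟨f₀, hf₀, hmin⟩ := exists_min_image F (crossZ v) hF ⟨f, hf⟩
  have hpull (u : Z2) (hu : y u = y' u) : (x : Config A) (f₀ + u) = (x' : Config A) (f₀ + u) :=
    (hrule' u).mp hu f₀ hf₀
  have hz' : crossZ v (f₀ + z) = crossZ v f₀ - 1 := by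
    rw [crossZ_add_right, show crossZ v z = -1 from hz]; ring
  have hall := hN.eqOn_le_sub_one hX hz hz' hm x.2 x'.2
    (fun q (hq : crossZ v f₀ ≤ crossZ v q) => by
      simpa only [add_sub_cancel] using
        hpull (q - f₀) (hH (show 0 ≤ crossZ v (q - f₀) by rw [crossZ_sub_right]; linarith)))
    (fun k hk => by simpa only [add_assoc] using hpull _ (hB k hk))
  refine hall (show crossZ v f₀ - 1 ≤ crossZ v (f + p) from ?_)
  rw [crossZ_add_right, toR2_mem_lineL0.mp hp]
  linarith [hmin f hf]

theorem ClosingRay.of_injective (hY : ∀ u, ∀ y ∈ Y, shiftAct u y ∈ Y) (hF : F.Finite)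
    (hΨ : Function.Injective Ψ) (hrule : HasExactWindow Ψ F)
    {v : Z2} (h : ClosingRay Y v) : ClosingRay X v := by
  obtain ⟨N, hN : ClosingWith Y v N⟩ := h
  rcases F.eq_empty_or_nonempty with rfl | ⟨f₁, hf₁⟩
  · refine ⟨0, fun z _ m _ x hx x' hx' _ p _ => ?_⟩
    have hxx' : (⟨x, hx⟩ : X) = ⟨x', hx'⟩ :=
      hΨ (Subtype.ext (funext fun u => (hrule u _ _).mpr (by simp)))
    exact congrFun (congrArg Subtype.val hxx') p
  obtain ⟨f₀, hf₀, hmin⟩ := exists_min_image F (crossZ v) hF ⟨f₁, hf₁⟩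
  obtain ⟨M, hM⟩ := (hF.image fun f => (f - f₀).1.natAbs + (f - f₀).2.natAbs).bddAbove
  refine ⟨N + 2 * M, fun z hz m hm x hx x' hx' hagree p hp => ?_⟩
  have hz : crossZ v z = -1 := hz
  obtain ⟨hH, hB⟩ := eqOn_of_agree_leftHalfPlane_union_blockOn hagree
  have hHy :
      EqOn (Ψ ⟨x, hx⟩ : Config A') (Ψ ⟨x', hx'⟩) {u | -crossZ v f₀ ≤ crossZ v u} :=
    fun u (hu : -crossZ v f₀ ≤ crossZ v u) => (hrule u _ _).mpr fun f hf =>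
      hH (show 0 ≤ crossZ v (f + u) by rw [crossZ_add_right]; linarith [hmin f hf])
  have hBy : ∀ k < m - 2 * M,
      (Ψ ⟨x, hx⟩ : Config A') (z - f₀ + (M : ℤ) • v + (k : ℤ) • v)
        = (Ψ ⟨x', hx'⟩ : Config A') (z - f₀ + (M : ℤ) • v + (k : ℤ) • v) := fun k hk =>
    (hrule _ _ _).mpr <| apply_add_eq_of_eqOn_of_block hz hmin (fun f hf => hM ⟨f, hf, rfl⟩)
      hH hB (by omega)
  have hz' : crossZ v (z - f₀ + (M : ℤ) • v) = -crossZ v f₀ - 1 := by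
    rw [crossZ_add_right, crossZ_sub_right, crossZ_smul_right, crossZ_self, hz]; ring
  have hall := hN.eqOn_le_sub_one hY hz hz' (by omega) (Ψ _).2 (Ψ _).2 hHy hBy
  have hp' : -crossZ v f₀ - 1 ≤ crossZ v (p - f₀) := by
    rw [crossZ_sub_right, toR2_mem_lineL0.mp hp]; omega
  simpa only [add_sub_cancel] using (hrule (p - f₀) _ _).mp (hall hp') f₀ hf₀

end Recoding

theorem statement7_general {A A' : Type}
    (X : Set (Config A)) (Y : Set (Config A'))
    (hX : IsSubshift X) (hY : IsSubshift Y)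
    (F : Set Z2) (hF : F.Finite) (hrec : IsRecodingVia X Y F)
    (v : Z2) :
    (ClosingRay X v ↔ ClosingRay Y v) := by
  let : TopologicalSpace A := ⊥
  let : TopologicalSpace A' := ⊥
  obtain ⟨Ψ, -, hrule⟩ := hrec
  exact ⟨ClosingRay.of_surjective hX.2 hF Ψ.surjective hrule,
    ClosingRay.of_injective hY.2 hF Ψ.injective hrule⟩

/-- a recoding preserves the closing property of rational
nonexpansive rays, in both directions. -/
theorem statement7 {A A' : Type} [Fintype A] [Nonempty A] [Fintype A'] [Nonempty A']
    (X : Set (Config A)) (Y : Set (Config A'))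
    (hX : IsSubshift X) (hY : IsSubshift Y)
    (F : Set Z2) (hF : F.Finite) (hrec : IsRecodingVia X Y F)
    (v : Z2) (hprim : Int.gcd v.1 v.2 = 1)
    (hne : ¬ ExpansiveRay X (toR2 v)) :
    (ClosingRay X v ↔ ClosingRay Y v) :=
  statement7_general X Y hX hY F hF hrec v

end PolygonalShifts
end

section
/- Let X be a ℤ²-subshift, let S be the rational sector determined by rays (ℓ₁, ℓ₂), and let S_s be the supplementary sector determined by (ℓ₂, −ℓ₁). If S_s is weakly corner coding for X, then every ray contained in the interior of the cone spanned by ℓ₁ and ℓ₂ is expansive for X. -/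
namespace PolygonalShifts

/-!
Let `u` lie strictly inside the cone of `e₁, e₂`. On the supplementary sector `S` spanned by
`e₂` and `-e₁` the function `p ↦ crossR u p` is a positive combination of the two coordinates
`crossZ e₁ p, crossZ e₂ p ≥ 0`, so each translate `q + S` leaves the half plane `H_u` only at
finitely many points. Given configurations agreeing on `H_u` and a site `p`, pick `w ∈ S \ F₀` and
shift by `q = p - w`: the shifted configurations agree on `S` minus a finite set, hence, by weak
corner coding, on `S \ F₀ ∋ w`.
-/

lemma toR2_ne_zero {p : Z2} (hp : p ≠ 0) : toR2 p ≠ 0 := by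
  simpa [toR2, Prod.ext_iff] using hp

lemma toR2_add (p q : Z2) : toR2 (p + q) = toR2 p + toR2 q := by
  simp [toR2]

lemma toR2_neg (p : Z2) : toR2 (-p) = -toR2 p := by
  simp [toR2]

lemma toR2_zsmul (k : ℤ) (p : Z2) : toR2 (k • p) = (k : ℝ) • toR2 p := by
  simp [toR2]

lemma crossR_toR2 (p q : Z2) : crossR (toR2 p) (toR2 q) = crossZ p q := by
  simp only [crossR, crossZ, toR2]
  push_cast
  ring

lemma crossR_add_right (u v w : ℝ × ℝ) : crossR u (v + w) = crossR u v + crossR u w := by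
  simp only [crossR, Prod.fst_add, Prod.snd_add]
  ring

lemma crossR_smul_right (u v : ℝ × ℝ) (t : ℝ) : crossR u (t • v) = t * crossR u v := by
  simp only [crossR, Prod.smul_fst, Prod.smul_snd, smul_eq_mul]
  ring

lemma crossR_self (u : ℝ × ℝ) : crossR u u = 0 := by
  simp only [crossR]
  ring

lemma crossZ_neg_right (p q : Z2) : crossZ p (-q) = crossZ q p := by
  simp only [crossZ, Prod.fst_neg, Prod.snd_neg]
  ring

lemma ne_zero_right_of_crossZ_ne_zero {p q : Z2} (h : crossZ p q ≠ 0) : q ≠ 0 := by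
  rintro rfl
  simp [crossZ] at h

lemma ne_zero_left_of_crossZ_ne_zero {p q : Z2} (h : crossZ p q ≠ 0) : p ≠ 0 := by
  rintro rfl
  simp [crossZ] at h

lemma crossR_nonneg_of_sameRay {u v w : ℝ × ℝ} (h : SameRay ℝ v w) (hv : v ≠ 0)
    (huv : 0 ≤ crossR u v) : 0 ≤ crossR u w := by
  obtain ⟨t, ht, rfl⟩ := h.exists_nonneg_left hv
  rw [crossR_smul_right]
  exact mul_nonneg ht huv

lemma crossZ_nonneg_of_mem_sectorZ {e₁ e₂ p : Z2} (hor : 0 < crossZ e₁ e₂)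
    (hp : p ∈ SectorZ e₂ (-e₁)) : 0 ≤ crossZ e₁ p ∧ 0 ≤ crossZ e₂ p := by
  have he₂ : toR2 e₂ ≠ 0 := toR2_ne_zero (ne_zero_right_of_crossZ_ne_zero hor.ne')
  have he₁ : toR2 (-e₁) ≠ 0 :=
    toR2_ne_zero (neg_ne_zero.mpr (ne_zero_left_of_crossZ_ne_zero hor.ne'))
  suffices 0 ≤ crossR (toR2 e₁) (toR2 p) ∧ 0 ≤ crossR (toR2 e₂) (toR2 p) by
    rw [crossR_toR2, crossR_toR2] at this
    exact_mod_cast this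
  have hD : 0 < crossR (toR2 e₁) (toR2 e₂) := by rw [crossR_toR2]; exact_mod_cast hor
  rcases hp with hray | hray | ⟨h₂, h₁⟩
  · exact ⟨crossR_nonneg_of_sameRay hray he₂ hD.le,
      crossR_nonneg_of_sameRay hray he₂ (crossR_self _).ge⟩
  · refine ⟨crossR_nonneg_of_sameRay hray he₁ ?_, crossR_nonneg_of_sameRay hray he₁ ?_⟩
    · rw [toR2_neg, ← neg_one_smul ℝ, crossR_smul_right, crossR_self, mul_zero]
    · rw [crossR_toR2, crossZ_neg_right, ← crossR_toR2]
      exact hD.le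
  · rw [crossZ_neg_right] at h₁
    rw [crossR_toR2, crossR_toR2]
    exact ⟨by exact_mod_cast h₁.le, by exact_mod_cast h₂.le⟩

lemma crossZ_pair_injective {e₁ e₂ : Z2} (hor : crossZ e₁ e₂ ≠ 0) :
    Function.Injective fun p : Z2 => (crossZ e₁ p, crossZ e₂ p) := by
  intro p q h
  simp only [Prod.ext_iff, crossZ] at h hor
  obtain ⟨h₁, h₂⟩ := h
  refine Prod.ext (mul_left_cancel₀ hor ?_) (mul_left_cancel₀ hor ?_)
  · linear_combination e₂.1 * h₁ - e₁.1 * h₂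
  · linear_combination e₂.2 * h₁ - e₁.2 * h₂

lemma crossR_mul_crossZ (e₁ e₂ p : Z2) (u : ℝ × ℝ) :
    (crossZ e₁ e₂ : ℝ) * crossR u (toR2 p) =
      (crossZ e₁ p : ℝ) * crossR u (toR2 e₂) + (crossZ e₂ p : ℝ) * crossR (toR2 e₁) u := by
  simp only [crossZ, crossR, toR2]
  push_cast
  ring

lemma finite_sectorZ_crossR_lt {e₁ e₂ : Z2} (hor : 0 < crossZ e₁ e₂) {u : ℝ × ℝ}
    (hu₁ : 0 < crossR (toR2 e₁) u) (hu₂ : 0 < crossR u (toR2 e₂)) (M : ℝ) :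
    {p | p ∈ SectorZ e₂ (-e₁) ∧ crossR u (toR2 p) < M}.Finite := by
  have hD : (0 : ℝ) < crossZ e₁ e₂ := by exact_mod_cast hor
  set D : ℝ := (crossZ e₁ e₂ : ℝ)
  let a : ℤ := ⌈D * M / crossR u (toR2 e₂)⌉
  let b : ℤ := ⌈D * M / crossR (toR2 e₁) u⌉
  refine (((Set.finite_Icc (0, 0) (a, b)).preimage
    (crossZ_pair_injective hor.ne').injOn)).subset ?_
  rintro p ⟨hp, hpM⟩
  obtain ⟨h₁, h₂⟩ := crossZ_nonneg_of_mem_sectorZ hor hp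
  have hsum := crossR_mul_crossZ e₁ e₂ p u
  have h₁' : (0 : ℝ) ≤ crossZ e₁ p := by exact_mod_cast h₁
  have h₂' : (0 : ℝ) ≤ crossZ e₂ p := by exact_mod_cast h₂
  have hDM : D * crossR u (toR2 p) < D * M := mul_lt_mul_of_pos_left hpM hD
  have ha : (crossZ e₁ p : ℝ) ≤ D * M / crossR u (toR2 e₂) := by
    rw [le_div_iff₀ hu₂]; linarith [mul_nonneg h₂' hu₁.le]
  have hb : (crossZ e₂ p : ℝ) ≤ D * M / crossR (toR2 e₁) u := by
    rw [le_div_iff₀ hu₁]; linarith [mul_nonneg h₁' hu₂.le]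
  exact ⟨⟨h₁, h₂⟩, Int.cast_le.mp (ha.trans (Int.le_ceil _)),
    Int.cast_le.mp (hb.trans (Int.le_ceil _))⟩

lemma sectorZ_infinite {e₁ : Z2} (he₁ : e₁ ≠ 0) (e₂ : Z2) : (SectorZ e₁ e₂).Infinite := by
  refine Set.infinite_of_injective_forall_mem
    ((smul_left_injective ℤ he₁).comp (Nat.cast_injective (R := ℤ))) fun k => Or.inl ?_
  simp only [Function.comp_apply, toR2_zsmul, Int.cast_natCast]
  exact SameRay.sameRay_nonneg_smul_right _ k.cast_nonneg

theorem codes_univ_of_isWeaklyCornerCoding {A : Type*} {X : Set (Config A)}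
    (hshift : ∀ u : Z2, ∀ x ∈ X, shiftAct u x ∈ X) {e₁ e₂ : Z2}
    (hwcc : IsWeaklyCornerCoding X e₁ e₂) (hinf : (SectorZ e₁ e₂).Infinite)
    {H : Set (ℝ × ℝ)} (hH : ∀ q : Z2, {f | f ∈ SectorZ e₁ e₂ ∧ toR2 (q + f) ∉ H}.Finite) :
    Codes X H Set.univ := by
  intro x hx x' hx' hagree p _
  obtain ⟨F₀, hF₀, -, hcode⟩ := hwcc
  obtain ⟨w, hwS, hwF₀⟩ := (hinf.sdiff hF₀).nonempty
  have key := hcode _ (hH (p - w)) (fun _ hf => hf.1)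
    (shiftAct (p - w) x) (hshift _ x hx) (shiftAct (p - w) x') (hshift _ x' hx')
    (fun f ⟨hfS, hfH⟩ => hagree _ (not_not.mp fun h => hfH ⟨hfS, h⟩)) w ⟨hwS, hwF₀⟩
  simpa only [shiftAct, sub_add_cancel] using key

theorem statement12_general {A : Type} (X : Set (Config A))
    (hX : IsSubshift X)
    (e₁ e₂ : Z2) (hor : 0 < crossZ e₁ e₂)
    (hwcc : IsWeaklyCornerCoding X e₂ (-e₁)) :
    ∀ u : ℝ × ℝ, u ≠ 0 → 0 < crossR (toR2 e₁) u → 0 < crossR u (toR2 e₂) →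
      ExpansiveRay X u := by
  intro u _ hu₁ hu₂
  refine codes_univ_of_isWeaklyCornerCoding hX.2 hwcc
    (sectorZ_infinite (ne_zero_right_of_crossZ_ne_zero hor.ne') _) fun q => ?_
  refine (finite_sectorZ_crossR_lt hor hu₁ hu₂ (-crossR u (toR2 q))).subset ?_
  rintro f ⟨hf, hfH⟩
  have hneg : crossR u (toR2 (q + f)) < 0 := not_le.mp hfH
  rw [toR2_add, crossR_add_right] at hneg
  exact ⟨hf, by linarith⟩

/-- if the supplementary sector determined by `(ℓ₂, −ℓ₁)` is weakly
corner coding for `X`, then every ray in the interior of the cone spanned by `ℓ₁`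
and `ℓ₂` is expansive for `X`. -/
theorem statement12 {A : Type} [Fintype A] [Nonempty A] (X : Set (Config A))
    (hX : IsSubshift X)
    (e₁ e₂ : Z2) (he₁ : e₁ ≠ 0) (he₂ : e₂ ≠ 0) (hor : 0 < crossZ e₁ e₂)
    (hwcc : IsWeaklyCornerCoding X e₂ (-e₁)) :
    ∀ u : ℝ × ℝ, u ≠ 0 → 0 < crossR (toR2 e₁) u → 0 < crossR u (toR2 e₂) →
      ExpansiveRay X u :=
  statement12_general X hX e₁ e₂ hor hwcc

end PolygonalShifts
end
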